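/- Let d ≥ 1, let F : Matrix (Fin d) (Fin d) ℝ → ℝ, and let Ã be a d × d real matrix with all entries A_{ij} ≥ 0. Assume that for all d × d matrices M, N, |F(M) − F(N)| ≤ 2 Σ_{i,j} A_{ij} |M_{ij} − N_{ij}|. Define the Lax–Friedrichs-like numerical operator F̂(P^{−−}, P^{−+}, P^{+−}, P^{++}) := F((P^{−+} + P^{+−})/2) + Ã : (P^{−−} − P^{−+} − P^{+−} + P^{++}), where Ã : B := Σ_{i,j} A_{ij} B_{ij} denotes the Frobenius inner product. Then: (i) F̂(P, P, P, P) = F(P) for every P (consistency); (ii) F̂ is nondecreasing in its first argument P^{−−} and in its fourth argument P^{++} with respect to the entrywise order on matrices; and (iii) F̂ is nonincreasing in its second argument P^{−+} and in its third argument P^{+−} with respect to the entrywise order. (This makes precise the paper's assertion that the nonnegative matrix Ã in the Lax–Friedrichs-like operator (6.40) can be chosen to enforce the generalized monotonicity (g-monotonicity) property, and that the operator is consistent.) -/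

import Mathlib

open Finset

/-- The Lax–Friedrichs-like numerical operator (paper equation (6.40)):
`F̂(P^{−−}, P^{−+}, P^{+−}, P^{++}) := F((P^{−+} + P^{+−})/2)
  + Ã : (P^{−−} − P^{−+} − P^{+−} + P^{++})`, with `:` the Frobenius inner product. -/
noncomputable def laxFriedrichsOperator {d : ℕ}
    (F : Matrix (Fin d) (Fin d) ℝ → ℝ) (A : Matrix (Fin d) (Fin d) ℝ)
    (Pmm Pmp Ppm Ppp : Matrix (Fin d) (Fin d) ℝ) : ℝ :=
  F (Matrix.of fun i j => (Pmp i j + Ppm i j) / 2)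
    + ∑ i, ∑ j, A i j * (Pmm i j - Pmp i j - Ppm i j + Ppp i j)

/-! Monotonicity in `P^{−−}` and `P^{++}` comes from `Ã ≥ 0` alone. Raising `P^{−+}` by
`δ ≥ 0` shifts the argument of `F` by `δ/2`, so by the Lipschitz bound `F` rises by at most
`Ã : δ`, which is exactly what the pairing term loses. The operator is symmetric under exchanging
its two middle arguments, and under exchanging its outer ones, so each half of g-monotonicity
needs only one argument. -/

section LipschitzBound

variable {ι κ : Type*} [Fintype ι] [Fintype κ]

theorem sub_le_two_mul_sum_mul_sub {F : Matrix ι κ ℝ → ℝ} {A M N : Matrix ι κ ℝ}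
    (hLip : |F M - F N| ≤ 2 * ∑ i, ∑ j, A i j * |M i j - N i j|) (hNM : ∀ i j, N i j ≤ M i j) :
    F M - F N ≤ 2 * ∑ i, ∑ j, A i j * (M i j - N i j) := by
  refine (le_abs_self _).trans (hLip.trans_eq ?_)
  congr 1
  exact sum_congr rfl fun i _ ↦ sum_congr rfl fun j _ ↦ by
    rw [abs_of_nonneg (sub_nonneg.2 (hNM i j))]

end LipschitzBound

section LaxFriedrichs

variable {d : ℕ} {F : Matrix (Fin d) (Fin d) ℝ → ℝ} {A : Matrix (Fin d) (Fin d) ℝ}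

theorem laxFriedrichsOperator_self (P : Matrix (Fin d) (Fin d) ℝ) :
    laxFriedrichsOperator F A P P P P = F P := by
  simp [laxFriedrichsOperator]
  rfl

theorem laxFriedrichsOperator_comm_middle (Pmm Pmp Ppm Ppp : Matrix (Fin d) (Fin d) ℝ) :
    laxFriedrichsOperator F A Pmm Ppm Pmp Ppp = laxFriedrichsOperator F A Pmm Pmp Ppm Ppp := by
  unfold laxFriedrichsOperator
  congr 1
  · simp only [add_comm]
  · exact sum_congr rfl fun i _ ↦ sum_congr rfl fun j _ ↦ by ring

theorem laxFriedrichsOperator_comm_outer (Pmm Pmp Ppm Ppp : Matrix (Fin d) (Fin d) ℝ) :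
    laxFriedrichsOperator F A Ppp Pmp Ppm Pmm = laxFriedrichsOperator F A Pmm Pmp Ppm Ppp := by
  unfold laxFriedrichsOperator
  congr 1
  exact sum_congr rfl fun i _ ↦ sum_congr rfl fun j _ ↦ by ring

theorem laxFriedrichsOperator_mono_first (hA : ∀ i j, 0 ≤ A i j)
    {Pmm Qmm : Matrix (Fin d) (Fin d) ℝ} (h : ∀ i j, Pmm i j ≤ Qmm i j)
    (Pmp Ppm Ppp : Matrix (Fin d) (Fin d) ℝ) :
    laxFriedrichsOperator F A Pmm Pmp Ppm Ppp ≤ laxFriedrichsOperator F A Qmm Pmp Ppm Ppp := by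
  unfold laxFriedrichsOperator
  gcongr with i _ j _
  · exact hA i j
  · exact h i j

theorem laxFriedrichsOperator_anti_second
    (hLip : ∀ M N : Matrix (Fin d) (Fin d) ℝ,
      |F M - F N| ≤ 2 * ∑ i, ∑ j, A i j * |M i j - N i j|)
    {Pmp Qmp : Matrix (Fin d) (Fin d) ℝ} (h : ∀ i j, Pmp i j ≤ Qmp i j)
    (Pmm Ppm Ppp : Matrix (Fin d) (Fin d) ℝ) :
    laxFriedrichsOperator F A Pmm Qmp Ppm Ppp ≤ laxFriedrichsOperator F A Pmm Pmp Ppm Ppp := by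
  have hF := sub_le_two_mul_sum_mul_sub (hLip (Matrix.of fun i j ↦ (Qmp i j + Ppm i j) / 2)
    (Matrix.of fun i j ↦ (Pmp i j + Ppm i j) / 2)) fun i j ↦ by
      simp only [Matrix.of_apply]
      linarith [h i j]
  have hpairing : ∑ i, ∑ j, A i j * (Pmm i j - Qmp i j - Ppm i j + Ppp i j)
      = ∑ i, ∑ j, A i j * (Pmm i j - Pmp i j - Ppm i j + Ppp i j)
        - 2 * ∑ i, ∑ j, A i j * ((Matrix.of fun i j ↦ (Qmp i j + Ppm i j) / 2) i j
          - (Matrix.of fun i j ↦ (Pmp i j + Ppm i j) / 2) i j) := by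
    simp only [Matrix.of_apply, mul_sum, ← sum_sub_distrib]
    exact sum_congr rfl fun i _ ↦ sum_congr rfl fun j _ ↦ by ring
  unfold laxFriedrichsOperator
  linarith

end LaxFriedrichs

theorem laxFriedrichsOperator_consistent_and_gMonotone_general
    (d : ℕ) (F : Matrix (Fin d) (Fin d) ℝ → ℝ)
    (A : Matrix (Fin d) (Fin d) ℝ) (hA : ∀ i j, 0 ≤ A i j)
    (hLip : ∀ M N : Matrix (Fin d) (Fin d) ℝ,
      |F M - F N| ≤ 2 * ∑ i, ∑ j, A i j * |M i j - N i j|) :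
    (∀ P : Matrix (Fin d) (Fin d) ℝ, laxFriedrichsOperator F A P P P P = F P) ∧
      (∀ Pmm Qmm Pmp Ppm Ppp : Matrix (Fin d) (Fin d) ℝ, (∀ i j, Pmm i j ≤ Qmm i j) →
        laxFriedrichsOperator F A Pmm Pmp Ppm Ppp
          ≤ laxFriedrichsOperator F A Qmm Pmp Ppm Ppp) ∧
      (∀ Pmm Pmp Ppm Ppp Qpp : Matrix (Fin d) (Fin d) ℝ, (∀ i j, Ppp i j ≤ Qpp i j) →
        laxFriedrichsOperator F A Pmm Pmp Ppm Ppp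
          ≤ laxFriedrichsOperator F A Pmm Pmp Ppm Qpp) ∧
      (∀ Pmm Pmp Qmp Ppm Ppp : Matrix (Fin d) (Fin d) ℝ, (∀ i j, Pmp i j ≤ Qmp i j) →
        laxFriedrichsOperator F A Pmm Qmp Ppm Ppp
          ≤ laxFriedrichsOperator F A Pmm Pmp Ppm Ppp) ∧
      (∀ Pmm Pmp Ppm Qpm Ppp : Matrix (Fin d) (Fin d) ℝ, (∀ i j, Ppm i j ≤ Qpm i j) →
        laxFriedrichsOperator F A Pmm Pmp Qpm Ppp
          ≤ laxFriedrichsOperator F A Pmm Pmp Ppm Ppp) := by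
  refine ⟨laxFriedrichsOperator_self, fun Pmm Qmm Pmp Ppm Ppp h ↦ ?_,
    fun Pmm Pmp Ppm Ppp Qpp h ↦ ?_, fun Pmm Pmp Qmp Ppm Ppp h ↦ ?_,
    fun Pmm Pmp Ppm Qpm Ppp h ↦ ?_⟩
  · exact laxFriedrichsOperator_mono_first hA h Pmp Ppm Ppp
  · rw [← laxFriedrichsOperator_comm_outer Pmm, ← laxFriedrichsOperator_comm_outer Pmm]
    exact laxFriedrichsOperator_mono_first hA h Pmp Ppm Pmm
  · exact laxFriedrichsOperator_anti_second hLip h Pmm Ppm Ppp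
  · rw [← laxFriedrichsOperator_comm_middle Pmm Pmp, ← laxFriedrichsOperator_comm_middle Pmm Pmp]
    exact laxFriedrichsOperator_anti_second hLip h Pmm Pmp Ppp

/-- The Lax–Friedrichs-like numerical operator is consistent and, if the entries of `Ã`
are nonnegative and dominate (twice over) the entrywise Lipschitz behavior of `F`,
g-monotone: nondecreasing in its first and fourth arguments and nonincreasing in its
second and third arguments, with respect to the entrywise order on matrices. -/
theorem laxFriedrichsOperator_consistent_and_gMonotone
    (d : ℕ) (hd : 1 ≤ d) (F : Matrix (Fin d) (Fin d) ℝ → ℝ)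
    (A : Matrix (Fin d) (Fin d) ℝ) (hA : ∀ i j, 0 ≤ A i j)
    (hLip : ∀ M N : Matrix (Fin d) (Fin d) ℝ,
      |F M - F N| ≤ 2 * ∑ i, ∑ j, A i j * |M i j - N i j|) :
    (∀ P : Matrix (Fin d) (Fin d) ℝ, laxFriedrichsOperator F A P P P P = F P) ∧
      (∀ Pmm Qmm Pmp Ppm Ppp : Matrix (Fin d) (Fin d) ℝ, (∀ i j, Pmm i j ≤ Qmm i j) →
        laxFriedrichsOperator F A Pmm Pmp Ppm Ppp
          ≤ laxFriedrichsOperator F A Qmm Pmp Ppm Ppp) ∧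
      (∀ Pmm Pmp Ppm Ppp Qpp : Matrix (Fin d) (Fin d) ℝ, (∀ i j, Ppp i j ≤ Qpp i j) →
        laxFriedrichsOperator F A Pmm Pmp Ppm Ppp
          ≤ laxFriedrichsOperator F A Pmm Pmp Ppm Qpp) ∧
      (∀ Pmm Pmp Qmp Ppm Ppp : Matrix (Fin d) (Fin d) ℝ, (∀ i j, Pmp i j ≤ Qmp i j) →
        laxFriedrichsOperator F A Pmm Qmp Ppm Ppp
          ≤ laxFriedrichsOperator F A Pmm Pmp Ppm Ppp) ∧
      (∀ Pmm Pmp Ppm Qpm Ppp : Matrix (Fin d) (Fin d) ℝ, (∀ i j, Ppm i j ≤ Qpm i j) →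
        laxFriedrichsOperator F A Pmm Pmp Qpm Ppp
          ≤ laxFriedrichsOperator F A Pmm Pmp Ppm Ppp) :=
  laxFriedrichsOperator_consistent_and_gMonotone_general d F A hA hLip
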